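/- The family of involution modules of any symmetric 2-structure, together with X and ∅, forms a partitive crossing family: it is closed under intersection, union, difference, and symmetric difference of crossing members. -/

import Mathlib

/-- Two subsets `A`, `B` of `X` are *crossing* if `A ∩ B`, `A \ B`, `B \ A` are all
nonempty and `A ∪ B ≠ X`. -/
def Crossing {X : Type*} (A B : Set X) : Prop :=
  (A ∩ B).Nonempty ∧ (A \ B).Nonempty ∧ (B \ A).Nonempty ∧ A ∪ B ≠ Set.univ

/-- `U` is an involution module of the symmetric 2-structure `(X, E)` w.r.t. the
involution `I` of the colors: any two elements of `U` have identical or `I`-swapped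
colored neighborhoods outside `U`. -/
def IsInvolutionModule {X : Type*} (E : X → X → ℕ) (I : ℕ → ℕ) (U : Set X) : Prop :=
  ∀ u ∈ U, ∀ v ∈ U,
    (∀ i : ℕ, {x | x ∉ U ∧ E u x = i} = {x | x ∉ U ∧ E v x = i}) ∨
    (∀ i : ℕ, {x | x ∉ U ∧ E u x = i} = {x | x ∉ U ∧ E v x = I i})

/-- `F ⊆ 2^X` is a *partitive crossing family* if `X, ∅ ∈ F` and `F` is closed under
intersection, union, difference and symmetric difference of crossing members. -/
def IsPartitiveCrossingFamily {X : Type*} (F : Set (Set X)) : Prop :=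
  Set.univ ∈ F ∧ ∅ ∈ F ∧
    ∀ A ∈ F, ∀ B ∈ F, Crossing A B →
      A ∩ B ∈ F ∧ A ∪ B ∈ F ∧ A \ B ∈ F ∧ symmDiff A B ∈ F

/-!
Write `u ≈_U v` (`TwinsOutside E I U u v`) when `u` and `v` see every `x ∉ U` with the same
colour, or every such `x` with `I`-swapped colours. The twists `id` and `I` form a group of
order two (`twist I` on `Bool` with `xor`), so `≈_U` is an equivalence relation, and the
involution modules are the sets `U` on which it is total.

For crossing modules `A` and `B` the closure properties come from chaining this relation
through points of `A ∩ B`, `A \ B`, `B \ A` and outside `A ∪ B`. A point outside `A ∪ B` forces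
the twist between two points of `A ∩ B` to be the same for `A` as for `B`, because `I` has no
fixed point. The difference and the symmetric difference rest on the symmetry of `E`: if
`x ≈_U y`, then two points outside `U` compare their colours towards `x` through the same twist
as towards `y`, since the twist coming from `x ≈_U y` is applied on both sides and cancels.
-/

section InvolutionModules

variable {X : Type*} {E : X → X → ℕ} {I : ℕ → ℕ}

def twist (I : ℕ → ℕ) (t : Bool) : ℕ → ℕ := bif t then I else id

section Twist

variable (hI : Function.Involutive I)
include hI

theorem twist_involutive (t : Bool) : Function.Involutive (twist I t) := by
  cases t
  · exact fun _ => rfl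
  · exact hI

theorem twist_twist (s t : Bool) (i : ℕ) : twist I s (twist I t i) = twist I (s ^^ t) i := by
  cases s <;> cases t <;> simp [twist, hI _]

theorem eq_twist_comm {t : Bool} {i j : ℕ} : i = twist I t j ↔ j = twist I t i :=
  ⟨fun h => h ▸ (twist_involutive hI t j).symm, fun h => h ▸ (twist_involutive hI t i).symm⟩

theorem twist_conj (s t : Bool) (i : ℕ) : twist I s (twist I t (twist I s i)) = twist I t i := by
  cases s <;> cases t <;> simp [twist, hI _]

end Twist

theorem twist_left_injective (hfpf : ∀ i, I i ≠ i) {s t : Bool} {i : ℕ}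
    (h : twist I s i = twist I t i) : s = t := by
  cases s <;> cases t <;> simp only [twist, cond_false, cond_true, id] at h ⊢
  · exact (hfpf i h.symm).elim
  · exact (hfpf i h).elim

variable (E I) in
def TwinsOutside (U : Set X) (u v : X) : Prop :=
  ∃ t : Bool, ∀ x ∉ U, E u x = twist I t (E v x)

theorem fibers_eq_iff {f : ℕ → ℕ} (hf : Function.Involutive f) {g h : X → ℕ} {U : Set X} :
    (∀ i, {x | x ∉ U ∧ g x = i} = {x | x ∉ U ∧ h x = f i}) ↔ ∀ x ∉ U, g x = f (h x) := by
  constructor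
  · intro hfib x hx
    rw [((hfib (g x)).subset ⟨hx, rfl⟩).2, hf]
  · intro hgh i
    ext x
    simp only [Set.mem_ofPred_eq, and_congr_right_iff]
    intro hx
    rw [hgh x hx, hf.eq_iff]

theorem isInvolutionModule_iff (hI : Function.Involutive I) {U : Set X} :
    IsInvolutionModule E I U ↔ ∀ u ∈ U, ∀ v ∈ U, TwinsOutside E I U u v := by
  simp only [TwinsOutside, Bool.exists_bool]
  exact forall₂_congr fun u _ => forall₂_congr fun v _ =>
    or_congr (fibers_eq_iff (f := id) fun _ => rfl) (fibers_eq_iff hI)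

namespace TwinsOutside

variable {U V : Set X} {u v w : X}

theorem symm (hI : Function.Involutive I) (h : TwinsOutside E I U u v) :
    TwinsOutside E I U v u := by
  obtain ⟨t, ht⟩ := h
  exact ⟨t, fun x hx => (eq_twist_comm hI).mp (ht x hx)⟩

theorem trans (hI : Function.Involutive I) (huv : TwinsOutside E I U u v)
    (hvw : TwinsOutside E I U v w) : TwinsOutside E I U u w := by
  obtain ⟨s, hs⟩ := huv
  obtain ⟨t, ht⟩ := hvw
  exact ⟨s ^^ t, fun x hx => by rw [hs x hx, ht x hx, twist_twist hI]⟩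

theorem mono (hUV : U ⊆ V) (h : TwinsOutside E I U u v) : TwinsOutside E I V u v := by
  obtain ⟨t, ht⟩ := h
  exact ⟨t, fun x hx => ht x (fun hxU => hx (hUV hxU))⟩

theorem eq_twist_of_eq_twist (hsymm : ∀ x y, E x y = E y x) (hI : Function.Involutive I)
    {x y : X} (hxy : TwinsOutside E I U x y) (hu : u ∉ U) (hv : v ∉ U) {t : Bool}
    (h : E u y = twist I t (E v y)) : E u x = twist I t (E v x) := by
  obtain ⟨σ, hσ⟩ := hxy
  have hvy : E v y = twist I σ (E v x) := by
    rw [hsymm v y, hsymm v x]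
    exact (eq_twist_comm hI).mp (hσ v hv)
  calc E u x = twist I σ (E u y) := by rw [hsymm u x, hsymm u y]; exact hσ u hu
    _ = twist I σ (twist I t (twist I σ (E v x))) := by rw [h, hvy]
    _ = twist I t (E v x) := twist_conj hI σ t _

end TwinsOutside

theorem isInvolutionModule_of_forall_twinsOutside (hI : Function.Involutive I) {U : Set X}
    {w : X} (h : ∀ p ∈ U, TwinsOutside E I U p w) : IsInvolutionModule E I U :=
  (isInvolutionModule_iff hI).mpr fun u hu v hv => (h u hu).trans hI ((h v hv).symm hI)

theorem Crossing.symm {A B : Set X} (h : Crossing A B) : Crossing B A := by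
  obtain ⟨hAB, hA, hB, hU⟩ := h
  exact ⟨Set.inter_comm A B ▸ hAB, hB, hA, Set.union_comm A B ▸ hU⟩

namespace IsInvolutionModule

variable {A B : Set X}

theorem twinsOutside (hI : Function.Involutive I) (hA : IsInvolutionModule E I A) {u v : X}
    (hu : u ∈ A) (hv : v ∈ A) : TwinsOutside E I A u v :=
  (isInvolutionModule_iff hI).mp hA u hu v hv

theorem inter (hI : Function.Involutive I) (hfpf : ∀ i, I i ≠ i)
    (hA : IsInvolutionModule E I A) (hB : IsInvolutionModule E I B) (hAB : A ∪ B ≠ Set.univ) :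
    IsInvolutionModule E I (A ∩ B) := by
  obtain ⟨z, hz⟩ := (Set.ne_univ_iff_exists_notMem _).mp hAB
  rw [Set.mem_union, not_or] at hz
  refine (isInvolutionModule_iff hI).mpr fun u hu v hv => ?_
  obtain ⟨s, hs⟩ := hA.twinsOutside hI hu.1 hv.1
  obtain ⟨t, ht⟩ := hB.twinsOutside hI hu.2 hv.2
  obtain rfl : s = t := twist_left_injective hfpf ((hs z hz.1).symm.trans (ht z hz.2))
  refine ⟨s, fun x hx => ?_⟩
  by_cases hxA : x ∈ A
  · exact ht x fun hxB => hx ⟨hxA, hxB⟩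
  · exact hs x hxA

theorem union (hI : Function.Involutive I) (hA : IsInvolutionModule E I A)
    (hB : IsInvolutionModule E I B) (hAB : (A ∩ B).Nonempty) :
    IsInvolutionModule E I (A ∪ B) := by
  obtain ⟨w, hwA, hwB⟩ := hAB
  refine isInvolutionModule_of_forall_twinsOutside hI (w := w) fun p hp => ?_
  rcases hp with hp | hp
  · exact (hA.twinsOutside hI hp hwA).mono Set.subset_union_left
  · exact (hB.twinsOutside hI hp hwB).mono Set.subset_union_right

theorem diff (hsymm : ∀ x y, E x y = E y x) (hI : Function.Involutive I)
    (hA : IsInvolutionModule E I A) (hB : IsInvolutionModule E I B) (hBA : (B \ A).Nonempty) :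
    IsInvolutionModule E I (A \ B) := by
  obtain ⟨b, hbB, hbA⟩ := hBA
  refine (isInvolutionModule_iff hI).mpr fun u hu v hv => ?_
  obtain ⟨t, ht⟩ := hA.twinsOutside hI hu.1 hv.1
  refine ⟨t, fun x hx => ?_⟩
  by_cases hxA : x ∈ A
  · have hxB : x ∈ B := by_contra fun hxB => hx ⟨hxA, hxB⟩
    exact (hB.twinsOutside hI hxB hbB).eq_twist_of_eq_twist hsymm hI hu.2 hv.2 (ht b hbA)
  · exact ht x hxA

theorem twinsOutside_symmDiff_of_mem_diff (hsymm : ∀ x y, E x y = E y x)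
    (hI : Function.Involutive I) (hfpf : ∀ i, I i ≠ i) (hA : IsInvolutionModule E I A)
    (hB : IsInvolutionModule E I B) (hAB : A ∪ B ≠ Set.univ) {u v w : X} (hu : u ∈ A \ B)
    (hv : v ∈ B \ A) (hw : w ∈ A ∩ B) : TwinsOutside E I (symmDiff A B) u v := by
  obtain ⟨τ, hτ⟩ := hA.twinsOutside hI hu.1 hw.1
  obtain ⟨ρ, hρ⟩ := hB.twinsOutside hI hw.2 hv.1
  refine ⟨ρ ^^ τ, fun x hx => ?_⟩
  rw [Set.mem_symmDiff, not_or, not_and_not_right, not_and_not_right] at hx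
  by_cases hxA : x ∈ A
  · have huw : E u w = twist I (ρ ^^ τ) (E v w) := by
      rw [hsymm u w, hρ u hu.2, hsymm v u, hτ v hv.2, twist_twist hI, hsymm w v]
    exact ((hA.inter hI hfpf hB hAB).twinsOutside hI ⟨hxA, hx.1 hxA⟩ hw).eq_twist_of_eq_twist
      hsymm hI (fun h => hu.2 h.2) (fun h => hv.2 h.1) huw
  · have hxB : x ∉ B := fun hxB => hxA (hx.2 hxB)
    rw [hτ x hxA, hρ x hxB, twist_twist hI, Bool.xor_comm]

theorem symmDiff (hsymm : ∀ x y, E x y = E y x) (hI : Function.Involutive I)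
    (hfpf : ∀ i, I i ≠ i) (hA : IsInvolutionModule E I A) (hB : IsInvolutionModule E I B)
    (hAB : Crossing A B) : IsInvolutionModule E I (symmDiff A B) := by
  obtain ⟨⟨w, hw⟩, ⟨a, ha⟩, hBA, hcover⟩ := hAB
  refine isInvolutionModule_of_forall_twinsOutside hI (w := a) fun p hp => ?_
  rcases hp with hp | hp
  · exact ((hA.diff hsymm hI hB hBA).twinsOutside hI hp ha).mono Set.subset_union_left
  · have hpa := hB.twinsOutside_symmDiff_of_mem_diff hsymm hI hfpf hA
      (Set.union_comm A B ▸ hcover) hp ha ⟨hw.2, hw.1⟩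
    rwa [symmDiff_comm] at hpa

theorem of_mem_of_crossing (hA : A ∈ {U | IsInvolutionModule E I U} ∪ {Set.univ, ∅})
    (hAB : Crossing A B) : IsInvolutionModule E I A := by
  obtain ⟨⟨w, hw⟩, -, -, hcover⟩ := hAB
  rcases hA with hA | rfl | rfl
  · exact hA
  · exact absurd (Set.univ_union B) hcover
  · exact absurd hw.1 (Set.notMem_empty w)

end IsInvolutionModule

end InvolutionModules

theorem involutionModules_isPartitiveCrossingFamily_general {X : Type*}
    (E : X → X → ℕ) (hsymm : ∀ x y, E x y = E y x)
    (I : ℕ → ℕ) (hinv : ∀ i, I (I i) = i) (hfpf : ∀ i, I i ≠ i) :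
    IsPartitiveCrossingFamily
      ({U : Set X | IsInvolutionModule E I U} ∪ {Set.univ, ∅}) := by
  refine ⟨Or.inr (Or.inl rfl), Or.inr (Or.inr rfl), fun A hA B hB hAB => ?_⟩
  have hAmod := IsInvolutionModule.of_mem_of_crossing hA hAB
  have hBmod := IsInvolutionModule.of_mem_of_crossing hB hAB.symm
  exact ⟨Or.inl (hAmod.inter hinv hfpf hBmod hAB.2.2.2),
    Or.inl (hAmod.union hinv hBmod hAB.1),
    Or.inl (hAmod.diff hsymm hinv hBmod hAB.2.2.1),
    Or.inl (hAmod.symmDiff hsymm hinv hfpf hBmod hAB)⟩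

/-- The family of involution modules of any symmetric 2-structure, together with `X`
and `∅`, forms a partitive crossing family. -/
theorem involutionModules_isPartitiveCrossingFamily {X : Type*} [Fintype X]
    (E : X → X → ℕ) (hsymm : ∀ x y, E x y = E y x)
    (I : ℕ → ℕ) (hinv : ∀ i, I (I i) = i) (hfpf : ∀ i, I i ≠ i) :
    IsPartitiveCrossingFamily
      ({U : Set X | IsInvolutionModule E I U} ∪ {Set.univ, ∅}) :=
  involutionModules_isPartitiveCrossingFamily_general E hsymm I hinv hfpf
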